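/- Let f ∈ F_q[T] be a monic polynomial. Then every monic irreducible Q ∈ F_q[T] with χ_q(Q(0)) = −1 divides f with even multiplicity if and only if every monic irreducible Q ∈ F_q[T] such that Q(−S²) is irreducible in F_q[S] divides f with even multiplicity. Equivalently, for a monic irreducible Q ∈ F_q[T] of degree at least 1, one has χ_q(Q(0)) = −1 if and only if Q(−S²) is irreducible in F_q[S]. -/

import Mathlib

open Polynomial Module

/-!
Let `α` be the root of `Q` in `K = F[X]/(Q)`. Then `N_{K/F}(-α) = Q(0)`, and over a finite field an
element is a square exactly when its norm is, so `χ(Q(0)) = -1` says that `-α` is not a square in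
`K`. That in turn is equivalent to irreducibility of `Q(-X²)`, whose roots are the square roots of
the conjugates of `-α`.
-/

theorem AlgHom.two_mul_finrank_le_of_fieldRange_ne_top {F K L : Type*} [Field F] [Field K]
    [Field L] [Algebra F K] [Algebra F L] [FiniteDimensional F L] (φ : K →ₐ[F] L)
    (h : φ.fieldRange ≠ ⊤) : 2 * finrank F K ≤ finrank F L := by
  rw [← finrank_mul_finrank F φ.fieldRange L, φ.equivFieldRange.toLinearEquiv.finrank_eq,
    mul_comm]
  have : finrank φ.fieldRange L ≠ 1 := mt IntermediateField.finrank_eq_one_iff_eq_top.mp h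
  have : 0 < finrank φ.fieldRange L := finrank_pos
  gcongr
  omega

/-- Both sides amount to `x ^ ((#L - 1) / 2) = 1`, since `N(x) = x ^ ((#L - 1) / (#K - 1))`. -/
theorem FiniteField.isSquare_norm_iff {K L : Type*} [Field K] [Field L] [Algebra K L] [Finite L]
    {x : L} : IsSquare (Algebra.norm K x) ↔ IsSquare x := by
  have := Finite.of_injective _ (algebraMap K L).injective
  have := Fintype.ofFinite K
  have := Fintype.ofFinite L
  rcases eq_or_ne x 0 with rfl | hx
  · simp
  by_cases hK : ringChar K = 2
  · simp only [isSquare_of_char_two hK, isSquare_of_char_two (Algebra.ringChar_eq K L ▸ hK)]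
  have hL : ringChar L ≠ 2 := Algebra.ringChar_eq K L ▸ hK
  rw [isSquare_iff hK (Algebra.norm_ne_zero_iff.mpr hx), isSquare_iff hL hx,
    ← (algebraMap K L).injective.eq_iff, map_pow, map_one, algebraMap_norm_eq_pow, ← pow_mul,
    ← Fintype.card_eq_nat_card, ← Fintype.card_eq_nat_card, card_eq_pow_finrank (K := K)]
  obtain ⟨k, hk⟩ := Nat.odd_iff.mpr (odd_card_of_char_ne_two hK)
  have hk0 : 0 < k := by have : 1 < Fintype.card K := Fintype.one_lt_card; omega
  obtain ⟨m, hm⟩ : 2 * k ∣ (2 * k + 1) ^ finrank K L - 1 := by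
    simpa only [one_pow, Nat.add_sub_cancel] using
      Nat.sub_dvd_pow_sub_pow (2 * k + 1) 1 (finrank K L)
  have hpos : 0 < (2 * k + 1) ^ finrank K L := by positivity
  rw [hk, Nat.add_sub_cancel, hm, Nat.mul_div_cancel_left _ (by omega),
    show (2 * k + 1) / 2 = k by omega, mul_comm m]
  rw [mul_assoc] at hm
  congr! 2
  omega

theorem Polynomial.natDegree_comp_neg_X_sq {R : Type*} [CommRing R] [IsDomain R] (Q : R[X]) :
    (Q.comp (-X ^ 2)).natDegree = 2 * Q.natDegree := by
  rw [natDegree_comp, natDegree_neg, natDegree_X_pow, mul_comm]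

namespace AdjoinRoot

variable {F : Type*} [Field F] {Q : F[X]}

theorem finrank_eq_natDegree (Q : F[X]) : finrank F (AdjoinRoot Q) = Q.natDegree :=
  finrank_quotient_span_eq_natDegree

theorem norm_neg_root (hm : Q.Monic) : Algebra.norm F (-root Q) = Q.eval 0 := by
  rw [show -root Q = algebraMap F _ (-1) * root Q by simp, map_mul, Algebra.norm_algebraMap,
    ← powerBasis_gen hm.ne_zero, Algebra.PowerBasis.norm_gen_eq_coeff_zero_minpoly,
    minpoly_powerBasis_gen_of_monic hm, powerBasis_dim, finrank_eq_natDegree, ← mul_assoc,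
    ← mul_pow, neg_one_mul, neg_neg, one_pow, one_mul, coeff_zero_eq_eval_zero]

variable [hQ : Fact (Irreducible Q)]

/-- A square root of `-root Q` is a root of `Q(-X²)` of degree at most `deg Q < deg Q(-X²)`. -/
theorem not_irreducible_comp_neg_X_sq_of_isSquare (h : IsSquare (-root Q)) :
    ¬Irreducible (Q.comp (-X ^ 2)) := by
  obtain ⟨γ, hγ⟩ := h
  have := (powerBasis hQ.out.ne_zero).finite
  have hγR : aeval γ (Q.comp (-X ^ 2)) = 0 := by
    rw [aeval_comp, map_neg, map_pow, aeval_X, sq, ← hγ, neg_neg, aeval_eq, mk_self]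
  intro hR
  have hdeg := minpoly.natDegree_le (A := F) γ
  rw [← minpoly.eq_of_irreducible hR hγR, natDegree_mul_C (by simp [hR.ne_zero]),
    natDegree_comp_neg_X_sq, finrank_eq_natDegree] at hdeg
  have := hQ.out.natDegree_pos
  omega

/-- If `β` is a root of an irreducible factor `p` of `Q(-X²)`, then `-β²` is a root of `Q`, so
`F[X]/(Q)` embeds into `F[X]/(p)`; as `β` lies outside the image, `deg p ≥ 2 deg Q`. -/
theorem irreducible_comp_neg_X_sq_of_not_isSquare (h : ¬IsSquare (-root Q)) :
    Irreducible (Q.comp (-X ^ 2)) := by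
  have hdeg : 0 < (Q.comp (-X ^ 2)).natDegree := by
    rw [natDegree_comp_neg_X_sq]
    exact Nat.mul_pos two_pos hQ.out.natDegree_pos
  obtain ⟨p, hp, hpR⟩ := exists_irreducible_of_natDegree_pos hdeg
  suffices (Q.comp (-X ^ 2)).natDegree ≤ p.natDegree from
    (associated_of_dvd_of_natDegree_le hpR (ne_zero_of_natDegree_gt hdeg) this).irreducible hp
  have := Fact.mk hp
  have := (powerBasis hp.ne_zero).finite
  have hα : aeval (-root p ^ 2) Q = 0 := by
    have := aeval_eq_zero_of_dvd_aeval_eq_zero hpR (eval₂_root p)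
    rwa [aeval_comp, map_neg, map_pow, aeval_X] at this
  let φ := liftAlgHom Q (Algebra.ofId F (AdjoinRoot p)) (-root p ^ 2) hα
  have hroot : root p ∉ φ.fieldRange := by
    intro hmem
    obtain ⟨γ, hγ⟩ := φ.mem_fieldRange.mp hmem
    have : φ (-root Q) = φ (γ * γ) := by
      rw [map_neg, show φ (root Q) = -root p ^ 2 from liftAlgHom_root .., map_mul, hγ, sq, neg_neg]
    exact h ⟨γ, φ.injective this⟩
  have := φ.two_mul_finrank_le_of_fieldRange_ne_top fun htop => hroot (htop ▸ trivial)
  rwa [finrank_eq_natDegree, finrank_eq_natDegree, ← natDegree_comp_neg_X_sq] at this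

theorem irreducible_comp_neg_X_sq_iff : Irreducible (Q.comp (-X ^ 2)) ↔ ¬IsSquare (-root Q) :=
  ⟨fun hR h => not_irreducible_comp_neg_X_sq_of_isSquare h hR,
    irreducible_comp_neg_X_sq_of_not_isSquare⟩

end AdjoinRoot

theorem quadraticChar_eval_zero_eq_neg_one_iff {F : Type*} [Field F] [Fintype F] [DecidableEq F]
    {Q : F[X]} (hm : Q.Monic) (hQ : Irreducible Q) :
    quadraticChar F (Q.eval 0) = -1 ↔ Irreducible (Q.comp (-X ^ 2)) := by
  have := Fact.mk hQ
  have := (AdjoinRoot.powerBasis hQ.ne_zero).finite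
  have := Module.finite_of_finite F (M := AdjoinRoot Q)
  rw [quadraticChar_neg_one_iff_not_isSquare, ← AdjoinRoot.norm_neg_root hm,
    FiniteField.isSquare_norm_iff, AdjoinRoot.irreducible_comp_neg_X_sq_iff]

theorem even_multiplicity_condition_equiv_general (F : Type) [Field F] [Fintype F] [DecidableEq F]
    (f : F[X]) :
    ((∀ Q : F[X], Q.Monic → Irreducible Q → quadraticChar F (Q.eval 0) = -1 →
        Even (multiplicity Q f)) ↔
      (∀ Q : F[X], Q.Monic → Irreducible Q → Irreducible (Q.comp (-(X ^ 2))) →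
        Even (multiplicity Q f))) ∧
    (∀ Q : F[X], Q.Monic → Irreducible Q → 1 ≤ Q.natDegree →
      (quadraticChar F (Q.eval 0) = -1 ↔ Irreducible (Q.comp (-(X ^ 2))))) :=
  ⟨forall_congr' fun _ => forall_congr' fun hm => forall_congr' fun hQ => by
      rw [quadraticChar_eval_zero_eq_neg_one_iff hm hQ],
    fun _ hm hQ _ => quadraticChar_eval_zero_eq_neg_one_iff hm hQ⟩

/-- For monic `f ∈ F_q[T]` (`q` odd): all monic irreducibles `Q` with
`χ_q(Q(0)) = -1` divide `f` with even multiplicity iff all monic irreducibles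
`Q` with `Q(-S²)` irreducible in `F_q[S]` do; equivalently, for a monic
irreducible `Q` of degree at least `1`, `χ_q(Q(0)) = -1` iff `Q(-S²)` is
irreducible in `F_q[S]`. -/
theorem even_multiplicity_condition_equiv (F : Type) [Field F] [Fintype F] [DecidableEq F]
    (hq : Odd (Fintype.card F)) (f : F[X]) (hf : f.Monic) :
    ((∀ Q : F[X], Q.Monic → Irreducible Q → quadraticChar F (Q.eval 0) = -1 →
        Even (multiplicity Q f)) ↔
      (∀ Q : F[X], Q.Monic → Irreducible Q → Irreducible (Q.comp (-(X ^ 2))) →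
        Even (multiplicity Q f))) ∧
    (∀ Q : F[X], Q.Monic → Irreducible Q → 1 ≤ Q.natDegree →
      (quadraticChar F (Q.eval 0) = -1 ↔ Irreducible (Q.comp (-(X ^ 2))))) :=
  even_multiplicity_condition_equiv_general F f
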